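/- arXiv:1112.4911 — 3 statements merged into one kernel-verified Lean document; each statement's English description precedes it below -/
import Mathlib

section
/- For every real x > 0, the sum over n ≥ 1 of λ(n)/(e^{nπx} + 1) equals φ(x) − 2φ(2x), where φ(x) = Σ_{k≥1} e^{−k²πx}. -/
/-
With `q = e^{-πx}` we have `1 / (e^{nπx} + 1) = q^n / (1 - q^n) - 2 q^{2n} / (1 - q^{2n})`, so the
sum splits into the Lambert series `∑ λ(n) r^n / (1 - r^n)` at `r = q` and `r = q²`. Expanding
`r^n / (1 - r^n) = ∑_{m ≥ 1} r^{nm}` and regrouping by `N = nm`, the coefficient of `r^N` is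
`∑_{d ∣ N} λ(d)`; this is multiplicative, equal to `[k even]` at `p^k`, hence the indicator of the
squares. So each Lambert series is `∑_{k ≥ 1} r^{k²}`, which is `φ(x)` at `r = q` and `φ(2x)` at
`r = q²`.
-/

open Real

/-- The Liouville function `λ(n) = (-1)^Ω(n)`. -/
def liouville (n : ℕ) : ℤ := (-1) ^ n.primeFactorsList.length

noncomputable def phi (x : ℝ) : ℝ := ∑' k : ℕ, Real.exp (-((k : ℝ) + 1) ^ 2 * π * x)

theorem Nat.isSquare_iff_forall_even_factorization {n : ℕ} (hn : n ≠ 0) :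
    IsSquare n ↔ ∀ p ∈ n.primeFactors, Even (n.factorization p) := by
  constructor
  · rintro ⟨m, rfl⟩ p -
    simp [Nat.factorization_mul (left_ne_zero_of_mul hn) (left_ne_zero_of_mul hn)]
  · intro h
    refine ⟨n.factorization.prod fun p e => p ^ (e / 2), ?_⟩
    rw [← sq, Finsupp.prod, ← Finset.prod_pow]
    conv_lhs => rw [← Nat.prod_factorization_pow_eq_self hn]
    refine Finset.prod_congr rfl fun p hp => ?_
    rw [← pow_mul, Nat.div_mul_cancel (h p (Nat.support_factorization n ▸ hp)).two_dvd]

open scoped ArithmeticFunction.zeta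

namespace ArithmeticFunction

theorem liouville_mul_zeta_apply_prime_pow {p k : ℕ} (hp : p.Prime) :
    (liouville * ζ) (p ^ k) = if Even k then 1 else 0 := by
  rw [coe_mul_zeta_apply, Nat.sum_divisors_prime_pow hp]
  simp only [liouville_apply (pow_ne_zero _ hp.ne_zero), cardFactors_apply_prime_pow hp,
    neg_one_geom_sum]
  by_cases hk : Even k <;> simp [hk, Nat.even_add_one]

theorem sum_divisors_liouville {n : ℕ} (hn : n ≠ 0) :
    ∑ d ∈ n.divisors, liouville d = if IsSquare n then 1 else 0 := by
  rw [← coe_mul_zeta_apply,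
    (isMultiplicative_liouville.mul isMultiplicative_zeta.natCast).multiplicative_factorization
      _ hn,
    Finsupp.prod, Nat.support_factorization,
    Finset.prod_congr rfl fun p hp =>
      liouville_mul_zeta_apply_prime_pow (Nat.prime_of_mem_primeFactors hp),
    Finset.prod_boole]
  simp only [Nat.isSquare_iff_forall_even_factorization hn]

theorem norm_liouville_le {𝕜 : Type*} [NormedDivisionRing 𝕜] (n : ℕ) :
    ‖(liouville n : 𝕜)‖ ≤ 1 := by
  rcases eq_or_ne n 0 with rfl | hn
  · simp
  · simp [liouville_apply hn]

end ArithmeticFunction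

section LambertSeries

variable {𝕜 : Type*} [NontriviallyNormedField 𝕜] [CompleteSpace 𝕜] {r : 𝕜}

omit [CompleteSpace 𝕜] in
theorem tsum_pnat_pow_mul_eq_div_one_sub (hr : ‖r‖ < 1) (n : ℕ+) :
    ∑' m : ℕ+, r ^ (n * m : ℕ) = r ^ (n : ℕ) / (1 - r ^ (n : ℕ)) := by
  have hrn : ‖r ^ (n : ℕ)‖ < 1 := by
    rw [norm_pow]
    exact pow_lt_one₀ (norm_nonneg _) hr n.ne_zero
  simp_rw [pow_mul]
  rw [tsum_pnat_eq_tsum_succ (f := fun m => (r ^ (n : ℕ)) ^ m)]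
  simp_rw [pow_succ']
  rw [tsum_mul_left, tsum_geometric_of_norm_lt_one hrn, div_eq_mul_inv]

theorem summable_prod_mul_pow_of_norm_le {f : ℕ → 𝕜} {C : ℝ} (hf : ∀ n, ‖f n‖ ≤ C)
    (hr : ‖r‖ < 1) : Summable fun c : ℕ+ × ℕ+ => f c.1 * r ^ (c.1 * c.2 : ℕ) := by
  have h := summable_prod_mul_pow 0 (r := ‖r‖) (by simpa using hr)
  refine (h.mul_left C).of_norm_bounded fun c => ?_
  simp only [pow_zero, one_mul, norm_mul, norm_pow]
  exact mul_le_mul_of_nonneg_right (hf c.1) (by positivity)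

theorem summable_mul_pow_div_one_sub {f : ℕ → 𝕜} {C : ℝ} (hf : ∀ n, ‖f n‖ ≤ C)
    (hr : ‖r‖ < 1) : Summable fun n : ℕ+ => f n * r ^ (n : ℕ) / (1 - r ^ (n : ℕ)) := by
  refine (summable_prod_mul_pow_of_norm_le hf hr).prod.congr fun n => ?_
  dsimp only
  rw [tsum_mul_left, tsum_pnat_pow_mul_eq_div_one_sub hr, mul_div_assoc]

theorem tsum_mul_pow_div_one_sub_eq_tsum_sum_divisors {f : ℕ → 𝕜} {C : ℝ}
    (hf : ∀ n, ‖f n‖ ≤ C) (hr : ‖r‖ < 1) :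
    ∑' n : ℕ+, f n * r ^ (n : ℕ) / (1 - r ^ (n : ℕ)) =
      ∑' N : ℕ+, (∑ d ∈ (N : ℕ).divisors, f d) * r ^ (N : ℕ) := by
  have hs := summable_prod_mul_pow_of_norm_le hf hr
  calc ∑' n : ℕ+, f n * r ^ (n : ℕ) / (1 - r ^ (n : ℕ))
      = ∑' c : ℕ+ × ℕ+, f c.1 * r ^ (c.1 * c.2 : ℕ) := by
        rw [hs.tsum_prod]
        refine tsum_congr fun n => ?_
        dsimp only
        rw [tsum_mul_left, tsum_pnat_pow_mul_eq_div_one_sub hr, mul_div_assoc]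
    _ = ∑' c : (Σ N : ℕ+, (N : ℕ).divisorsAntidiagonal),
          f c.2.1.1 * r ^ (c.2.1.1 * c.2.1.2) := by
        simp only [← sigmaAntidiagonalEquivProd.tsum_eq, sigmaAntidiagonalEquivProd,
          divisorsAntidiagonalFactors, PNat.mk_coe, Equiv.coe_fn_mk]
    _ = ∑' N : ℕ+, ∑ d ∈ (N : ℕ).divisorsAntidiagonal, f d.1 * r ^ (d.1 * d.2) := by
        have hσ : Summable fun c : (Σ N : ℕ+, (N : ℕ).divisorsAntidiagonal) =>
            f c.2.1.1 * r ^ (c.2.1.1 * c.2.1.2) := by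
          simpa [← sigmaAntidiagonalEquivProd.summable_iff, sigmaAntidiagonalEquivProd,
            divisorsAntidiagonalFactors, Function.comp_def] using hs
        rw [hσ.tsum_sigma]
        refine tsum_congr fun N => ?_
        rw [tsum_fintype, Finset.univ_eq_attach,
          Finset.sum_attach _ (fun d : ℕ × ℕ => f d.1 * r ^ (d.1 * d.2))]
    _ = ∑' N : ℕ+, (∑ d ∈ (N : ℕ).divisors, f d) * r ^ (N : ℕ) := by
        refine tsum_congr fun N => ?_
        rw [Nat.sum_divisorsAntidiagonal (fun a b => f a * r ^ (a * b)), Finset.sum_mul]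
        refine Finset.sum_congr rfl fun d hd => ?_
        rw [Nat.mul_div_cancel' (Nat.dvd_of_mem_divisors hd)]

theorem summable_liouville_mul_pow_div_one_sub (hr : ‖r‖ < 1) :
    Summable fun n : ℕ+ =>
      (ArithmeticFunction.liouville n : 𝕜) * r ^ (n : ℕ) / (1 - r ^ (n : ℕ)) :=
  summable_mul_pow_div_one_sub (f := fun n => (ArithmeticFunction.liouville n : 𝕜))
    ArithmeticFunction.norm_liouville_le hr

theorem tsum_liouville_mul_pow_div_one_sub_eq_tsum_pow_sq (hr : ‖r‖ < 1) :
    ∑' n : ℕ+, (ArithmeticFunction.liouville n : 𝕜) * r ^ (n : ℕ) / (1 - r ^ (n : ℕ)) =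
      ∑' k : ℕ+, r ^ ((k : ℕ) ^ 2) := by
  rw [tsum_mul_pow_div_one_sub_eq_tsum_sum_divisors ArithmeticFunction.norm_liouville_le hr]
  have hsq (N : ℕ+) : (∑ d ∈ (N : ℕ).divisors, (ArithmeticFunction.liouville d : 𝕜)) =
      if IsSquare (N : ℕ) then 1 else 0 := by
    rw [← Int.cast_sum, ArithmeticFunction.sum_divisors_liouville N.ne_zero]
    push_cast
    rfl
  simp_rw [hsq]
  have hinj : Function.Injective fun k : ℕ+ => k ^ 2 := fun a b h =>
    PNat.coe_injective (Nat.pow_left_injective two_ne_zero (by simpa using congrArg PNat.val h))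
  rw [← hinj.tsum_eq]
  · simp [IsSquare.sq]
  · intro N hN
    obtain ⟨m, hm⟩ : IsSquare (N : ℕ) := by
      by_contra h
      simp [h] at hN
    have hm0 : 0 < m := Nat.pos_of_mul_pos_left (hm ▸ N.pos)
    exact ⟨⟨m, hm0⟩, PNat.eq <| (PNat.pow_coe _ _).trans (by rw [PNat.mk_coe, hm, sq])⟩

end LambertSeries

theorem div_inv_pow_add_one_eq_sub {q : ℝ} (hq0 : 0 < q) (hq1 : q < 1) {n : ℕ} (hn : n ≠ 0)
    (a : ℝ) :
    a / ((q ^ n)⁻¹ + 1) =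
      a * q ^ n / (1 - q ^ n) - 2 * (a * (q ^ 2) ^ n / (1 - (q ^ 2) ^ n)) := by
  have ht0 : 0 < q ^ n := pow_pos hq0 n
  have ht1 : q ^ n < 1 := pow_lt_one₀ hq0.le hq1 hn
  have h1 : 1 - q ^ n ≠ 0 := by linarith
  have h2 : 1 - (q ^ 2) ^ n ≠ 0 := by
    rw [← pow_mul, mul_comm, pow_mul]
    nlinarith
  field_simp
  ring

theorem phi_eq_tsum_pnat (x : ℝ) : phi x = ∑' k : ℕ+, exp (-(π * x)) ^ ((k : ℕ) ^ 2) := by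
  rw [tsum_pnat_eq_tsum_succ (f := fun k => exp (-(π * x)) ^ (k ^ 2)), phi]
  refine tsum_congr fun k => ?_
  rw [← exp_nat_mul]
  push_cast
  ring_nf

theorem liouville_eq_arithmeticFunction_liouville {n : ℕ} (hn : n ≠ 0) :
    liouville n = ArithmeticFunction.liouville n := by
  rw [ArithmeticFunction.liouville_apply hn, ArithmeticFunction.cardFactors_apply, liouville]

theorem liouville_plus_one_sum (x : ℝ) (hx : 0 < x) :
    ∑' n : ℕ, (liouville (n + 1) : ℝ) / (Real.exp (((n : ℝ) + 1) * π * x) + 1) =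
      phi x - 2 * phi (2 * x) := by
  set q := exp (-(π * x))
  have hq0 : 0 < q := exp_pos _
  have hq1 : q < 1 := exp_lt_one_iff.mpr (neg_lt_zero.mpr (by positivity))
  have hq : ‖q‖ < 1 := by rwa [norm_of_nonneg hq0.le]
  have hq2 : ‖q ^ 2‖ < 1 :=
    (norm_pow q 2).trans_lt (pow_lt_one₀ (norm_nonneg _) hq two_ne_zero)
  let F (r : ℝ) (n : ℕ) : ℝ := ArithmeticFunction.liouville n * r ^ n / (1 - r ^ n)
  have hF {r : ℝ} (hr : ‖r‖ < 1) : Summable fun n : ℕ => F r (n + 1) :=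
    (summable_pnat_iff_summable_succ (f := F r)).mp (summable_liouville_mul_pow_div_one_sub hr)
  have hterm (n : ℕ) : (liouville (n + 1) : ℝ) / (exp (((n : ℝ) + 1) * π * x) + 1) =
      F q (n + 1) - 2 * F (q ^ 2) (n + 1) := by
    have hexp : exp (((n : ℝ) + 1) * π * x) = (q ^ (n + 1))⁻¹ := by
      rw [← exp_nat_mul, ← exp_neg]
      push_cast
      ring_nf
    rw [hexp, liouville_eq_arithmeticFunction_liouville n.succ_ne_zero,
      div_inv_pow_add_one_eq_sub hq0 hq1 n.succ_ne_zero]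
  rw [tsum_congr hterm, (hF hq).tsum_sub ((hF hq2).mul_left 2), tsum_mul_left,
    ← tsum_pnat_eq_tsum_succ (f := F q), ← tsum_pnat_eq_tsum_succ (f := F (q ^ 2)),
    tsum_liouville_mul_pow_div_one_sub_eq_tsum_pow_sq hq,
    tsum_liouville_mul_pow_div_one_sub_eq_tsum_pow_sq hq2,
    phi_eq_tsum_pnat, phi_eq_tsum_pnat,
    show exp (-(π * (2 * x))) = exp (-(π * x)) ^ 2 by rw [← exp_nat_mul]; ring_nf]
end

section
/- For complex x with 0 < |x| < 1, Σ_{n≥1} μ(n)/(x^{−n} − 1) = x. -/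
/-!
Expanding `x^n / (1 - x^n)` as a geometric series turns the Lambert series `∑ f(n) x^n / (1 - x^n)`
into the double series `∑_{a,b ≥ 1} f(a) x^(ab)`, which converges absolutely for bounded `f`.
Grouping its terms by `m = ab` gives `∑_m (f * ζ)(m) x^m`; for `f = μ` the Dirichlet convolution
`μ * ζ` is the unit `δ`, so only `x` survives. Finally `1 / (x^(-n) - 1) = x^n / (1 - x^n)`.
-/

open ArithmeticFunction
open scoped ArithmeticFunction.zeta ArithmeticFunction.Moebius

namespace ArithmeticFunction

theorem tsum_fiber_mul_eq_mul_apply {R : Type*} [Semiring R] [TopologicalSpace R]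
    (f g : ArithmeticFunction R) (c : ℕ → R) (m : ℕ) :
    ∑' p : (fun p : ℕ × ℕ ↦ p.1 * p.2) ⁻¹' {m}, f p.1.1 * g p.1.2 * c (p.1.1 * p.1.2) =
      (f * g) m * c m := by
  rcases eq_or_ne m 0 with rfl | hm
  · have hzero : ∀ p : (fun p : ℕ × ℕ ↦ p.1 * p.2) ⁻¹' {0},
        f p.1.1 * g p.1.2 * c (p.1.1 * p.1.2) = 0 := by
      rintro ⟨⟨a, b⟩, hp⟩
      rcases Nat.mul_eq_zero.mp hp with rfl | rfl <;> simp
    simp [hzero]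
  · rw [show (fun p : ℕ × ℕ ↦ p.1 * p.2) ⁻¹' {m} = m.divisorsAntidiagonal by ext; simp [hm],
      Finset.tsum_subtype' m.divisorsAntidiagonal fun p ↦ f p.1 * g p.2 * c (p.1 * p.2),
      mul_apply, Finset.sum_mul]
    exact Finset.sum_congr rfl fun p hp ↦ by rw [(Nat.mem_divisorsAntidiagonal.mp hp).1]

theorem hasSum_mul_apply_mul {R : Type*} [NormedRing R] [CompleteSpace R]
    {f g : ArithmeticFunction R} {c : ℕ → R}
    (h : Summable fun p : ℕ × ℕ ↦ f p.1 * g p.2 * c (p.1 * p.2)) :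
    HasSum (fun m ↦ (f * g) m * c m) (∑' p : ℕ × ℕ, f p.1 * g p.2 * c (p.1 * p.2)) := by
  simpa only [tsum_fiber_mul_eq_mul_apply] using
    h.hasSum.tsum_fiberwise fun p : ℕ × ℕ ↦ p.1 * p.2

section Lambert

variable {𝕜 : Type*} [NormedField 𝕜]

theorem hasSum_zeta_mul_pow {y : 𝕜} (hy : ‖y‖ < 1) :
    HasSum (fun k ↦ (ζ : ArithmeticFunction 𝕜) k * y ^ k) (y / (1 - y)) := by
  rw [← hasSum_nat_add_iff' 1]
  simpa [natCoe_apply, zeta_apply, pow_succ', div_eq_mul_inv] using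
    (hasSum_geometric_of_norm_lt_one hy).mul_left y

theorem summable_mul_zeta_mul_pow [CompleteSpace 𝕜] {f : ArithmeticFunction 𝕜} {C : ℝ}
    (hf : ∀ n, ‖f n‖ ≤ C) {x : 𝕜} (hx : ‖x‖ < 1) :
    Summable fun p : ℕ × ℕ ↦ f p.1 * (ζ : ArithmeticFunction 𝕜) p.2 * x ^ (p.1 * p.2) := by
  set r := √‖x‖
  have hr0 : 0 ≤ r := Real.sqrt_nonneg _
  have hr1 : r < 1 := by simpa using Real.sqrt_lt_sqrt (norm_nonneg x) hx
  have hC : 0 ≤ C := (norm_nonneg _).trans (hf 0)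
  refine Summable.of_norm_bounded (g := fun p : ℕ × ℕ ↦ C * (r ^ p.1 * r ^ p.2)) ?_ ?_
  · exact ((summable_geometric_of_lt_one hr0 hr1).mul_of_nonneg
      (summable_geometric_of_lt_one hr0 hr1) (fun _ ↦ by positivity)
      (fun _ ↦ by positivity)).mul_left C
  · rintro ⟨a, b⟩
    rcases Nat.eq_zero_or_pos a with rfl | ha
    · rw [map_zero, zero_mul, zero_mul, norm_zero]
      positivity
    rcases Nat.eq_zero_or_pos b with rfl | hb
    · rw [map_zero, mul_zero, zero_mul, norm_zero]
      positivity
    -- `a + b ≤ 2ab` for positive `a, b`, and `‖x‖ = r ^ 2`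
    calc ‖f a * (ζ : ArithmeticFunction 𝕜) b * x ^ (a * b)‖ = ‖f a‖ * r ^ (2 * (a * b)) := by
          simp [natCoe_apply, zeta_apply, hb.ne', pow_mul, Real.sq_sqrt (norm_nonneg x), r]
      _ ≤ C * r ^ (a + b) := by
          refine mul_le_mul (hf a) (pow_le_pow_of_le_one hr0 hr1.le ?_) (by positivity) hC
          nlinarith
      _ = C * (r ^ a * r ^ b) := by rw [pow_add]

theorem hasSum_mul_pow_div_one_sub_pow [CompleteSpace 𝕜] {f : ArithmeticFunction 𝕜} {C : ℝ}
    (hf : ∀ n, ‖f n‖ ≤ C) {x : 𝕜} (hx : ‖x‖ < 1) :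
    HasSum (fun n ↦ f n * x ^ n / (1 - x ^ n)) (∑' m, (f * ζ) m * x ^ m) := by
  have hsum := summable_mul_zeta_mul_pow hf hx
  have hrow (n : ℕ) : HasSum (fun k ↦ f n * (ζ : ArithmeticFunction 𝕜) k * x ^ (n * k))
      (f n * x ^ n / (1 - x ^ n)) := by
    rcases Nat.eq_zero_or_pos n with rfl | hn
    · simp
    have hxn : ‖x ^ n‖ < 1 := by simpa using pow_lt_one₀ (norm_nonneg x) hx hn.ne'
    simpa [mul_assoc, pow_mul, mul_div_assoc] using (hasSum_zeta_mul_pow hxn).mul_left (f n)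
  rw [(hasSum_mul_apply_mul hsum).tsum_eq]
  exact hsum.hasSum.prod_fiberwise hrow

end Lambert

end ArithmeticFunction

theorem div_zpow_neg_sub_one {K : Type*} [Field K] {x : K} (hx : x ≠ 0) (a : K) (n : ℕ) :
    a / (x ^ (-(n : ℤ)) - 1) = a * x ^ n / (1 - x ^ n) := by
  have hxn : x ^ n ≠ 0 := pow_ne_zero n hx
  rw [zpow_neg, zpow_natCast, ← div_div_eq_mul_div]
  congr 1
  field_simp

theorem moebius_lambert_inv (x : ℂ) (hx0 : x ≠ 0) (hx : ‖x‖ < 1) :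
    ∑' n : ℕ, (ArithmeticFunction.moebius n : ℂ) / (x ^ (-(n : ℤ)) - 1) = x := by
  have hμ (n : ℕ) : ‖(μ : ArithmeticFunction ℂ) n‖ ≤ 1 := by
    rw [intCoe_apply, Complex.norm_intCast]
    exact_mod_cast abs_moebius_le_one
  calc ∑' n : ℕ, (μ n : ℂ) / (x ^ (-(n : ℤ)) - 1)
      = ∑' n : ℕ, (μ : ArithmeticFunction ℂ) n * x ^ n / (1 - x ^ n) := by
        simp only [div_zpow_neg_sub_one hx0, intCoe_apply]
    _ = ∑' m, ((μ : ArithmeticFunction ℂ) * ζ) m * x ^ m :=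
        (hasSum_mul_pow_div_one_sub_pow hμ hx).tsum_eq
    _ = x := by simp [one_apply]
end

section
/- The limit as x → 1 from below (x real, 0 < x < 1) of Σ_{n≥1} μ(n)·x^n/(x^n + 1) equals −1. -/
/-!
Expanding `x ^ n / (x ^ n + 1) = ∑ₖ (-1) ^ (k + 1) x ^ (n k)` and collecting terms by `m = n k`
(a Lambert series rearrangement, absolutely convergent for `‖x‖ < 1`) turns the series into
`∑ₘ (μ * η) m x ^ m`, where `η k = (-1) ^ (k + 1)`. Since `η(s) = (1 - 2 ^ (1 - s)) ζ(s)` and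
`μ * ζ = 1`, the coefficients `μ * η` are those of `1 - 2 ^ (1 - s)`, so the sum is the
polynomial `x - 2 x ^ 2`, which tends to `-1` as `x → 1`.
-/

open Filter
open scoped ArithmeticFunction.zeta ArithmeticFunction.Moebius

namespace ArithmeticFunction

section Lambert

variable {𝕜 : Type*} [NormedField 𝕜]

lemma tsum_preimage_mul_eq_mul_apply_mul_pow (a f : ArithmeticFunction 𝕜) (x : 𝕜) (m : ℕ) :
    ∑' p : (fun p : ℕ × ℕ => p.1 * p.2) ⁻¹' {m}, a p.1.1 * f p.1.2 * x ^ (p.1.1 * p.1.2) =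
      (a * f) m * x ^ m := by
  rcases eq_or_ne m 0 with rfl | hm
  · have hzero : ∀ p : (fun p : ℕ × ℕ => p.1 * p.2) ⁻¹' {0},
        a p.1.1 * f p.1.2 * x ^ (p.1.1 * p.1.2) = 0 := by
      rintro ⟨⟨i, j⟩, hp⟩
      rcases Nat.mul_eq_zero.mp hp with rfl | rfl <;> simp
    simp [hzero]
  rw [show (fun p : ℕ × ℕ => p.1 * p.2) ⁻¹' {m} = m.divisorsAntidiagonal by ext; simp [hm],
    Finset.tsum_subtype' m.divisorsAntidiagonal fun p => a p.1 * f p.2 * x ^ (p.1 * p.2),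
    mul_apply, Finset.sum_mul]
  exact Finset.sum_congr rfl fun p hp => by rw [(Nat.mem_divisorsAntidiagonal.mp hp).1]

variable [CompleteSpace 𝕜] {a f : ArithmeticFunction 𝕜} {A B : ℝ} {x : 𝕜}

lemma summable_mul_mul_pow_mul (ha : ∀ n, ‖a n‖ ≤ A) (hf : ∀ k, ‖f k‖ ≤ B)
    (hx : ‖x‖ < 1) :
    Summable fun p : ℕ × ℕ => a p.1 * f p.2 * x ^ (p.1 * p.2) := by
  have hsucc : Function.Injective (Prod.map Nat.succ Nat.succ) :=
    Nat.succ_injective.prodMap Nat.succ_injective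
  refine (hsucc.summable_iff ?_).mp ?_
  · rintro ⟨_ | i, _ | j⟩ hp <;> simp at hp ⊢
  have hgeom : Summable fun n : ℕ => ‖x‖ ^ n :=
    summable_geometric_of_lt_one (norm_nonneg x) hx
  refine Summable.of_norm_bounded ((hgeom.mul_of_nonneg hgeom (fun _ => by positivity)
    (fun _ => by positivity)).mul_left (A * B)) fun ⟨i, j⟩ => ?_
  -- `(i + 1) (j + 1) ≥ i + j` dominates the family by a product of two geometric series
  have hpow : ‖x‖ ^ ((i + 1) * (j + 1)) ≤ ‖x‖ ^ (i + j) :=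
    pow_le_pow_of_le_one (norm_nonneg x) hx.le (by nlinarith)
  have hA : 0 ≤ A := (norm_nonneg _).trans (ha 0)
  have hB : 0 ≤ B := (norm_nonneg _).trans (hf 0)
  calc ‖a (i + 1) * f (j + 1) * x ^ ((i + 1) * (j + 1))‖
      ≤ A * B * ‖x‖ ^ (i + j) := by
        rw [norm_mul, norm_mul, norm_pow]
        exact mul_le_mul (mul_le_mul (ha _) (hf _) (norm_nonneg _) hA) hpow (by positivity)
          (by positivity)
    _ = A * B * (‖x‖ ^ i * ‖x‖ ^ j) := by rw [pow_add]

theorem tsum_mul_tsum_mul_pow_mul (ha : ∀ n, ‖a n‖ ≤ A) (hf : ∀ k, ‖f k‖ ≤ B)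
    (hx : ‖x‖ < 1) :
    ∑' n, a n * ∑' k, f k * x ^ (n * k) = ∑' m, (a * f) m * x ^ m := by
  have hsum := (summable_mul_mul_pow_mul ha hf hx).hasSum
  have hrows : ∀ n,
      HasSum (fun k => a n * f k * x ^ (n * k)) (a n * ∑' k, f k * x ^ (n * k)) := by
    intro n
    simpa only [mul_assoc, tsum_mul_left] using (hsum.summable.prod_factor n).hasSum
  refine (hsum.prod_fiberwise hrows).tsum_eq.trans ?_
  have hfibers := hsum.tsum_fiberwise (fun p : ℕ × ℕ => p.1 * p.2)
  simp only [tsum_preimage_mul_eq_mul_apply_mul_pow] at hfibers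
  exact hfibers.tsum_eq.symm

end Lambert

section Alternating

variable {R : Type*} [CommRing R]

def alternatingZeta : ArithmeticFunction R :=
  ⟨fun k => if k = 0 then 0 else (-1) ^ (k + 1), rfl⟩

lemma alternatingZeta_apply {k : ℕ} (hk : k ≠ 0) :
    (alternatingZeta : ArithmeticFunction R) k = (-1) ^ (k + 1) :=
  if_neg hk

/-- The Dirichlet coefficients of `1 - 2 ^ (1 - s) = η(s) / ζ(s)`. -/
def etaFactor : ArithmeticFunction R :=
  ⟨fun n => if n = 1 then 1 else if n = 2 then -2 else 0, rfl⟩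

lemma etaFactor_mul_zeta :
    (etaFactor : ArithmeticFunction R) * (ζ : ArithmeticFunction R) = alternatingZeta := by
  ext k
  rcases eq_or_ne k 0 with rfl | hk
  · simp
  have hsplit : ∀ i, (etaFactor : ArithmeticFunction R) i =
      (if i = 1 then 1 else 0) + (if i = 2 then -2 else 0) := by
    intro i
    simp only [etaFactor, coe_mk]
    split_ifs <;> simp_all
  rw [coe_mul_zeta_apply, Finset.sum_congr rfl fun i _ => hsplit i, Finset.sum_add_distrib,
    Finset.sum_ite_eq', Finset.sum_ite_eq', alternatingZeta_apply hk]
  rcases Nat.even_or_odd k with he | ho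
  · simp [hk, he.two_dvd, he.add_one.neg_one_pow]
    norm_num
  · simp [hk, Nat.not_even_iff_odd.mpr ho, ho.add_one.neg_one_pow, ← even_iff_two_dvd]

theorem moebius_mul_alternatingZeta :
    (μ : ArithmeticFunction R) * alternatingZeta = etaFactor := by
  rw [← etaFactor_mul_zeta, mul_left_comm, coe_moebius_mul_coe_zeta, mul_one]

lemma tsum_etaFactor_mul_pow [TopologicalSpace R] (x : R) :
    ∑' m, (etaFactor : ArithmeticFunction R) m * x ^ m = x - 2 * x ^ 2 := by
  rw [tsum_eq_sum (s := {1, 2}) fun m hm => ?_, Finset.sum_pair (by norm_num : (1 : ℕ) ≠ 2)]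
  · simp [etaFactor]
    ring
  · simp only [Finset.mem_insert, Finset.mem_singleton, not_or] at hm
    simp [etaFactor, hm.1, hm.2]

end Alternating

section NormedField

variable {𝕜 : Type*} [NormedField 𝕜]

lemma norm_alternatingZeta_le_one (k : ℕ) :
    ‖(alternatingZeta : ArithmeticFunction 𝕜) k‖ ≤ 1 := by
  rcases eq_or_ne k 0 with rfl | hk
  · simp
  · simp [alternatingZeta_apply hk]

lemma norm_moebius_le_one (n : ℕ) : ‖(μ : ArithmeticFunction 𝕜) n‖ ≤ 1 := by
  rcases Int.abs_le_one_iff.mp (abs_moebius_le_one (n := n)) with h | h | h <;>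
    simp [intCoe_apply, h]

lemma tsum_alternatingZeta_mul_pow {y : 𝕜} (hy : ‖y‖ < 1) :
    ∑' k, (alternatingZeta : ArithmeticFunction 𝕜) k * y ^ k = y / (y + 1) := by
  have hgeom : HasSum (fun j : ℕ => y * (-y) ^ j) (y * (1 - -y)⁻¹) :=
    (hasSum_geometric_of_norm_lt_one (by rwa [norm_neg])).mul_left y
  have hshift : (fun j : ℕ => y * (-y) ^ j) =
      fun j => (alternatingZeta : ArithmeticFunction 𝕜) (j + 1) * y ^ (j + 1) := by
    funext j
    rw [alternatingZeta_apply j.succ_ne_zero, neg_pow, pow_succ y, pow_succ (-1 : 𝕜) (j + 1)]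
    ring
  have hsum :
      HasSum (fun k => (alternatingZeta : ArithmeticFunction 𝕜) k * y ^ k) (y * (1 + y)⁻¹) :=
    (hasSum_nat_add_iff' 1).mp (by simpa [hshift] using hgeom)
  rw [hsum.tsum_eq, add_comm, div_eq_mul_inv]

end NormedField

theorem tsum_moebius_mul_pow_div_pow_add_one {𝕜 : Type*} [NormedField 𝕜] [CompleteSpace 𝕜]
    {x : 𝕜} (hx : ‖x‖ < 1) :
    ∑' n : ℕ, (μ n : 𝕜) * x ^ n / (x ^ n + 1) = x - 2 * x ^ 2 := by
  have hterm : ∀ n : ℕ, (μ n : 𝕜) * x ^ n / (x ^ n + 1) =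
      (μ : ArithmeticFunction 𝕜) n *
        ∑' k, (alternatingZeta : ArithmeticFunction 𝕜) k * x ^ (n * k) := by
    intro n
    rcases eq_or_ne n 0 with rfl | hn
    · simp
    have hxn : ‖x ^ n‖ < 1 := by
      rw [norm_pow]
      exact pow_lt_one₀ (norm_nonneg x) hx hn
    simp_rw [pow_mul, tsum_alternatingZeta_mul_pow hxn, intCoe_apply, mul_div_assoc]
  rw [tsum_congr hterm,
    tsum_mul_tsum_mul_pow_mul norm_moebius_le_one norm_alternatingZeta_le_one hx,
    moebius_mul_alternatingZeta, tsum_etaFactor_mul_pow]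

end ArithmeticFunction

theorem moebius_limit :
    Tendsto (fun x : ℝ => ∑' n : ℕ,
        (ArithmeticFunction.moebius n : ℝ) * x ^ n / (x ^ n + 1))
      (nhdsWithin 1 (Set.Ioo 0 1)) (nhds (-1)) := by
  have hpoly : Tendsto (fun x : ℝ => x - 2 * x ^ 2) (nhdsWithin 1 (Set.Ioo 0 1)) (nhds (-1)) := by
    have h := (by fun_prop : Continuous fun x : ℝ => x - 2 * x ^ 2).tendsto 1
    norm_num at h
    exact h.mono_left nhdsWithin_le_nhds
  refine hpoly.congr' (eventually_nhdsWithin_of_forall fun x hx => ?_)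
  have hx_norm : ‖x‖ < 1 := by
    rw [Real.norm_eq_abs, abs_of_pos hx.1]
    exact hx.2
  exact (ArithmeticFunction.tsum_moebius_mul_pow_div_pow_add_one hx_norm).symm
end
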